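/- Let c = (c_1, ..., c_m) and d = (d_1, ..., d_m) be weakly decreasing finite sequences of nonnegative integers with c ≠ d. Define ℓ = max{i : c_i ≠ d_i}, f = max{i ∈ {1,...,ℓ} : c_i < d_{i−1}} and f' = max{i ∈ {1,...,ℓ} : d_i < c_{i−1}}, where c_0 = d_0 = +∞. Let r, s be the conjugate partitions of c and d with r_0 = s_0 = m. Define x = min{i ≥ 1 : r_i ≠ s_i}, e = min{i ≥ x−1 : s_{i+1} ≥ r_{i+1}} and e' = min{i ≥ x−1 : r_{i+1} ≥ s_{i+1}}. Then e = c_f and e' = d_{f'}. -/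

import Mathlib

/-!
Write `r`, `s` for the conjugates of `c`, `d`. The conjugate is governed by the Galois connection
`i ≤ r k ↔ k ≤ c i`, and since `c`, `d` agree beyond `ℓ`, the first index where `r` and `s` differ is
`x = min (c ℓ) (d ℓ) + 1`, with `r k ≤ ℓ` from there on. The maximality of `f` says that on
`(f, ℓ]` each `c i` dominates `d (i - 1)`; with the Galois connection this gives `s k < r k` for
`x ≤ k ≤ c f`, while the condition `c f < d (f - 1)` gives `r (c f + 1) ≤ s (c f + 1)`. Hence the first
crossing `e` is `c f`; the claim for `e'` is the same statement with `c` and `d` exchanged.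
-/

open Finset

def conjugate (m : ℕ) (c : ℕ → ℕ) (k : ℕ) : ℕ := #{i ∈ Icc 1 m | k ≤ c i}

variable {m : ℕ} {c d : ℕ → ℕ}

theorem conjugate_le (k : ℕ) : conjugate m c k ≤ m :=
  (card_filter_le _ _).trans_eq (Nat.card_Icc 1 m)

theorem conjugate_antitone : Antitone (conjugate m c) := fun _ _ hkk' =>
  card_le_card (monotone_filter_right _ fun _ _ hk' => hkk'.trans hk')

theorem le_conjugate_iff (hc : AntitoneOn c (Set.Icc 1 m)) {i : ℕ} (hi : i ∈ Set.Icc 1 m)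
    (k : ℕ) : i ≤ conjugate m c k ↔ k ≤ c i := by
  unfold conjugate
  constructor
  · intro h
    by_contra! hlt
    have hsub : {j ∈ Icc 1 m | k ≤ c j} ⊆ Ico 1 i := fun j hj => by
      simp only [mem_filter, mem_Icc, mem_Ico] at hj ⊢
      refine ⟨hj.1.1, lt_of_not_ge fun hij => ?_⟩
      have := hc hi ⟨hj.1.1, hj.1.2⟩ hij
      omega
    have := card_le_card hsub
    simp only [Nat.card_Ico] at this
    have := hi.1
    omega
  · intro h
    have hsub : Icc 1 i ⊆ {j ∈ Icc 1 m | k ≤ c j} := fun j hj => by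
      simp only [mem_filter, mem_Icc] at hj ⊢
      exact ⟨⟨hj.1, hj.2.trans hi.2⟩, h.trans (hc ⟨hj.1, hj.2.trans hi.2⟩ hi hj.2)⟩
    simpa using card_le_card hsub

theorem conjugate_lt_iff (hc : AntitoneOn c (Set.Icc 1 m)) {i : ℕ} (hi : i ∈ Set.Icc 1 m)
    (k : ℕ) : conjugate m c k < i ↔ c i < k := by
  simpa only [not_le] using (le_conjugate_iff hc hi k).not

section LastDifference

variable {ℓ : ℕ}

theorem conjugate_eq_of_le_min (hc : AntitoneOn c (Set.Icc 1 m))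
    (hd : AntitoneOn d (Set.Icc 1 m)) (hℓ : ℓ ∈ Set.Icc 1 m)
    (hagree : ∀ i, ℓ < i → i ≤ m → c i = d i) {k : ℕ} (hk : k ≤ min (c ℓ) (d ℓ)) :
    conjugate m c k = conjugate m d k := by
  unfold conjugate
  congr 1
  refine filter_congr fun i hi => ?_
  rw [mem_Icc] at hi
  rcases le_or_gt i ℓ with hiℓ | hℓi
  · have := hc hi hℓ hiℓ
    have := hd hi hℓ hiℓ
    omega
  · rw [hagree i hℓi hi.2]

theorem conjugate_succ_lt_of_lt (hc : AntitoneOn c (Set.Icc 1 m))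
    (hd : AntitoneOn d (Set.Icc 1 m)) (hℓ : ℓ ∈ Set.Icc 1 m) (hlt : c ℓ < d ℓ) :
    conjugate m c (c ℓ + 1) < conjugate m d (c ℓ + 1) :=
  ((conjugate_lt_iff hc hℓ _).2 (Nat.lt_succ_self _)).trans_le ((le_conjugate_iff hd hℓ _).2 hlt)

theorem conjugate_min_succ_ne (hc : AntitoneOn c (Set.Icc 1 m))
    (hd : AntitoneOn d (Set.Icc 1 m)) (hℓ : ℓ ∈ Set.Icc 1 m) (hne : c ℓ ≠ d ℓ) :
    conjugate m c (min (c ℓ) (d ℓ) + 1) ≠ conjugate m d (min (c ℓ) (d ℓ) + 1) := by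
  rcases hne.lt_or_gt with hlt | hgt
  · rw [min_eq_left hlt.le]
    exact (conjugate_succ_lt_of_lt hc hd hℓ hlt).ne
  · rw [min_eq_right hgt.le]
    exact (conjugate_succ_lt_of_lt hd hc hℓ hgt).ne'

theorem conjugate_le_of_lt_conjugate (hc : AntitoneOn c (Set.Icc 1 m))
    (hd : AntitoneOn d (Set.Icc 1 m)) (hagree : ∀ i, ℓ < i → i ≤ m → c i = d i) {k : ℕ}
    (h : ℓ < conjugate m c k) : conjugate m c k ≤ conjugate m d k := by
  have ht : conjugate m c k ∈ Set.Icc 1 m := ⟨by omega, conjugate_le k⟩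
  rw [le_conjugate_iff hd ht, ← hagree _ h ht.2, ← le_conjugate_iff hc ht]

theorem conjugate_le_of_ne (hc : AntitoneOn c (Set.Icc 1 m))
    (hd : AntitoneOn d (Set.Icc 1 m)) (hagree : ∀ i, ℓ < i → i ≤ m → c i = d i) {k : ℕ}
    (hne : conjugate m c k ≠ conjugate m d k) : conjugate m c k ≤ ℓ := by
  by_contra! h
  have hcd := conjugate_le_of_lt_conjugate hc hd hagree h
  have hdc := conjugate_le_of_lt_conjugate hd hc (fun i h₁ h₂ => (hagree i h₁ h₂).symm)
    (h.trans_le hcd)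
  exact hne (hcd.antisymm hdc)

theorem eq_min_add_one_of_first_conjugate_ne (hc : AntitoneOn c (Set.Icc 1 m))
    (hd : AntitoneOn d (Set.Icc 1 m)) (hℓ : ℓ ∈ Set.Icc 1 m) (hne : c ℓ ≠ d ℓ)
    (hagree : ∀ i, ℓ < i → i ≤ m → c i = d i) {x : ℕ}
    (hx₂ : conjugate m c x ≠ conjugate m d x)
    (hx₃ : ∀ i, 1 ≤ i → i < x → conjugate m c i = conjugate m d i) :
    x = min (c ℓ) (d ℓ) + 1 := by
  have hle : x ≤ min (c ℓ) (d ℓ) + 1 := by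
    by_contra! h
    exact conjugate_min_succ_ne hc hd hℓ hne (hx₃ _ (by omega) h)
  have hgt : min (c ℓ) (d ℓ) < x := by
    by_contra! h
    exact hx₂ (conjugate_eq_of_le_min hc hd hℓ hagree h)
  omega

end LastDifference

section FirstCrossing

variable {ℓ f : ℕ}

theorem min_le_apply_of_descent (hc : AntitoneOn c (Set.Icc 1 m))
    (hd : AntitoneOn d (Set.Icc 1 m)) (hℓ : ℓ ∈ Set.Icc 1 m) (hf₁ : 1 ≤ f) (hfℓ : f ≤ ℓ)
    (hf₄ : ∀ i, f < i → i ≤ ℓ → d (i - 1) ≤ c i) : min (c ℓ) (d ℓ) ≤ c f := by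
  have hℓm := hℓ.2
  rcases hfℓ.eq_or_lt with rfl | hlt
  · exact min_le_left _ _
  · calc min (c ℓ) (d ℓ) ≤ d ℓ := min_le_right _ _
      _ ≤ d f := hd ⟨hf₁, by omega⟩ hℓ hfℓ
      _ ≤ c (f + 1) := by simpa using hf₄ (f + 1) (by omega) (by omega)
      _ ≤ c f := hc ⟨hf₁, by omega⟩ ⟨by omega, by omega⟩ (Nat.le_succ f)

theorem conjugate_apply_succ_le (hc : AntitoneOn c (Set.Icc 1 m))
    (hd : AntitoneOn d (Set.Icc 1 m)) (hf : f ∈ Set.Icc 1 m)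
    (hf₃ : 1 < f → c f < d (f - 1)) :
    conjugate m c (c f + 1) ≤ conjugate m d (c f + 1) := by
  have hlt : conjugate m c (c f + 1) < f := (conjugate_lt_iff hc hf _).2 (Nat.lt_succ_self _)
  obtain ⟨hf₁, hfm⟩ := hf
  rcases hf₁.eq_or_lt with rfl | hf₁
  · omega
  · have := (le_conjugate_iff hd ⟨by omega, by omega⟩ (c f + 1)).2 (hf₃ hf₁)
    omega

theorem conjugate_lt_of_min_lt (hc : AntitoneOn c (Set.Icc 1 m))
    (hd : AntitoneOn d (Set.Icc 1 m)) (hℓ : ℓ ∈ Set.Icc 1 m) (hne : c ℓ ≠ d ℓ)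
    (hagree : ∀ i, ℓ < i → i ≤ m → c i = d i) (hf₁ : 1 ≤ f) (hfℓ : f ≤ ℓ)
    (hf₄ : ∀ i, f < i → i ≤ ℓ → d (i - 1) ≤ c i) {k : ℕ}
    (hk : min (c ℓ) (d ℓ) < k) (hkf : k ≤ c f) : conjugate m d k < conjugate m c k := by
  set t := conjugate m c k
  have htℓ : t ≤ ℓ := (conjugate_antitone hk).trans
    (conjugate_le_of_ne hc hd hagree (conjugate_min_succ_ne hc hd hℓ hne))
  have hℓm := hℓ.2
  have hft : f ≤ t := (le_conjugate_iff hc ⟨hf₁, by omega⟩ k).2 hkf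
  have ht : t ∈ Set.Icc 1 m := ⟨by omega, by omega⟩
  have hkt : k ≤ c t := (le_conjugate_iff hc ht k).1 le_rfl
  have hdt : d t < k := by
    rcases htℓ.eq_or_lt with htℓ | htℓ
    · rw [htℓ] at hkt ⊢
      omega
    · have hnext : c (t + 1) < k :=
        (conjugate_lt_iff hc ⟨by omega, by omega⟩ k).1 (Nat.lt_succ_self t)
      have := hf₄ (t + 1) (by omega) (by omega)
      rw [Nat.add_sub_cancel] at this
      omega
  exact (conjugate_lt_iff hd ht k).2 hdt

theorem first_conjugate_crossing_eq (hc : AntitoneOn c (Set.Icc 1 m))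
    (hd : AntitoneOn d (Set.Icc 1 m)) {r s : ℕ → ℕ}
    (hr : ∀ k, 1 ≤ k → r k = conjugate m c k) (hs : ∀ k, 1 ≤ k → s k = conjugate m d k)
    (hℓ : ℓ ∈ Set.Icc 1 m) (hne : c ℓ ≠ d ℓ) (hagree : ∀ i, ℓ < i → i ≤ m → c i = d i)
    (hf₁ : 1 ≤ f) (hfℓ : f ≤ ℓ) (hf₃ : 1 < f → c f < d (f - 1))
    (hf₄ : ∀ i, f < i → i ≤ ℓ → d (i - 1) ≤ c i)
    {x e : ℕ} (hx₁ : 1 ≤ x) (hx₂ : r x ≠ s x) (hx₃ : ∀ i, 1 ≤ i → i < x → r i = s i)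
    (he₁ : x - 1 ≤ e) (he₂ : r (e + 1) ≤ s (e + 1))
    (he₃ : ∀ i, x - 1 ≤ i → i < e → s (i + 1) < r (i + 1)) : e = c f := by
  have hx : x = min (c ℓ) (d ℓ) + 1 := by
    refine eq_min_add_one_of_first_conjugate_ne hc hd hℓ hne hagree ?_ fun i hi hix => ?_
    · rwa [← hr x hx₁, ← hs x hx₁]
    · rw [← hr i hi, ← hs i hi]
      exact hx₃ i hi hix
  have hmin := min_le_apply_of_descent hc hd hℓ hf₁ hfℓ hf₄
  rcases lt_trichotomy e (c f) with hlt | heq | hgt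
  · have := conjugate_lt_of_min_lt hc hd hℓ hne hagree hf₁ hfℓ hf₄ (k := e + 1) (by omega) hlt
    rw [hr (e + 1) (by omega), hs (e + 1) (by omega)] at he₂
    omega
  · exact heq
  · have hcross := he₃ (c f) (by omega) hgt
    rw [hr (c f + 1) (by omega), hs (c f + 1) (by omega)] at hcross
    have := conjugate_apply_succ_le hc hd ⟨hf₁, hfℓ.trans hℓ.2⟩ hf₃
    omega

end FirstCrossing

theorem stmt5_general (m : ℕ) (c d : ℕ → ℕ)
    (hc : ∀ i j, 1 ≤ i → i ≤ j → j ≤ m → c j ≤ c i)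
    (hd : ∀ i j, 1 ≤ i → i ≤ j → j ≤ m → d j ≤ d i)
    (r s : ℕ → ℕ)
    (hr : ∀ k, 1 ≤ k → r k = ((Finset.Icc 1 m).filter fun i => k ≤ c i).card)
    (hs : ∀ k, 1 ≤ k → s k = ((Finset.Icc 1 m).filter fun i => k ≤ d i).card)
    (ℓ f f' x e e' : ℕ)
    (hl1 : 1 ≤ ℓ) (hl2 : ℓ ≤ m) (hl3 : c ℓ ≠ d ℓ)
    (hl4 : ∀ i, ℓ < i → i ≤ m → c i = d i)
    (hf1 : 1 ≤ f) (hf2 : f ≤ ℓ) (hf3 : 1 < f → c f < d (f - 1))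
    (hf4 : ∀ i, f < i → i ≤ ℓ → d (i - 1) ≤ c i)
    (hf'1 : 1 ≤ f') (hf'2 : f' ≤ ℓ) (hf'3 : 1 < f' → d f' < c (f' - 1))
    (hf'4 : ∀ i, f' < i → i ≤ ℓ → c (i - 1) ≤ d i)
    (hx1 : 1 ≤ x) (hx2 : r x ≠ s x) (hx3 : ∀ i, 1 ≤ i → i < x → r i = s i)
    (he1 : x - 1 ≤ e) (he2 : r (e + 1) ≤ s (e + 1))
    (he3 : ∀ i, x - 1 ≤ i → i < e → s (i + 1) < r (i + 1))
    (he'1 : x - 1 ≤ e') (he'2 : s (e' + 1) ≤ r (e' + 1))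
    (he'3 : ∀ i, x - 1 ≤ i → i < e' → r (i + 1) < s (i + 1)) :
    e = c f ∧ e' = d f' := by
  have hc' : AntitoneOn c (Set.Icc 1 m) := fun i hi j hj hij => hc i j hi.1 hij hj.2
  have hd' : AntitoneOn d (Set.Icc 1 m) := fun i hi j hj hij => hd i j hi.1 hij hj.2
  exact ⟨first_conjugate_crossing_eq hc' hd' hr hs ⟨hl1, hl2⟩ hl3 hl4 hf1 hf2 hf3 hf4
      hx1 hx2 hx3 he1 he2 he3,
    first_conjugate_crossing_eq hd' hc' hs hr ⟨hl1, hl2⟩ hl3.symm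
      (fun i h₁ h₂ => (hl4 i h₁ h₂).symm) hf'1 hf'2 hf'3 hf'4
      hx1 hx2.symm (fun i h₁ h₂ => (hx3 i h₁ h₂).symm) he'1 he'2 he'3⟩

/-- Lemma 4.6: with `c ≠ d` weakly decreasing sequences of length `m`, `r`, `s` their
conjugate partitions (with `r_0 = s_0 = m`), `ℓ = max{i : c_i ≠ d_i}`,
`f = max{i ≤ ℓ : c_i < d_{i−1}}`, `f' = max{i ≤ ℓ : d_i < c_{i−1}}` (convention
`c_0 = d_0 = +∞`, so the condition holds automatically at `i = 1`),
`x = min{i : r_i ≠ s_i}`, `e = min{i ≥ x−1 : s_{i+1} ≥ r_{i+1}}` and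
`e' = min{i ≥ x−1 : r_{i+1} ≥ s_{i+1}}`, one has `e = c_f` and `e' = d_{f'}`. -/
theorem stmt5 (m : ℕ) (c d : ℕ → ℕ)
    (hc : ∀ i j, 1 ≤ i → i ≤ j → j ≤ m → c j ≤ c i)
    (hd : ∀ i j, 1 ≤ i → i ≤ j → j ≤ m → d j ≤ d i)
    (hne : ∃ i, 1 ≤ i ∧ i ≤ m ∧ c i ≠ d i)
    (r s : ℕ → ℕ)
    (hr0 : r 0 = m) (hs0 : s 0 = m)
    (hr : ∀ k, 1 ≤ k → r k = ((Finset.Icc 1 m).filter fun i => k ≤ c i).card)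
    (hs : ∀ k, 1 ≤ k → s k = ((Finset.Icc 1 m).filter fun i => k ≤ d i).card)
    (ℓ f f' x e e' : ℕ)
    (hl1 : 1 ≤ ℓ) (hl2 : ℓ ≤ m) (hl3 : c ℓ ≠ d ℓ)
    (hl4 : ∀ i, ℓ < i → i ≤ m → c i = d i)
    (hf1 : 1 ≤ f) (hf2 : f ≤ ℓ) (hf3 : 1 < f → c f < d (f - 1))
    (hf4 : ∀ i, f < i → i ≤ ℓ → d (i - 1) ≤ c i)
    (hf'1 : 1 ≤ f') (hf'2 : f' ≤ ℓ) (hf'3 : 1 < f' → d f' < c (f' - 1))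
    (hf'4 : ∀ i, f' < i → i ≤ ℓ → c (i - 1) ≤ d i)
    (hx1 : 1 ≤ x) (hx2 : r x ≠ s x) (hx3 : ∀ i, 1 ≤ i → i < x → r i = s i)
    (he1 : x - 1 ≤ e) (he2 : r (e + 1) ≤ s (e + 1))
    (he3 : ∀ i, x - 1 ≤ i → i < e → s (i + 1) < r (i + 1))
    (he'1 : x - 1 ≤ e') (he'2 : s (e' + 1) ≤ r (e' + 1))
    (he'3 : ∀ i, x - 1 ≤ i → i < e' → r (i + 1) < s (i + 1)) :
    e = c f ∧ e' = d f' :=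
  stmt5_general m c d hc hd r s hr hs ℓ f f' x e e' hl1 hl2 hl3 hl4 hf1 hf2 hf3 hf4 hf'1 hf'2 hf'3
    hf'4 hx1 hx2 hx3 he1 he2 he3 he'1 he'2 he'3
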